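/- Let n ≥ 2 be an integer, N = 4n, and let a = (a₁,…,a_{2n}) be a tuple of integers with a₁ ≥ ⋯ ≥ a_{2n−1} ≥ |a_{2n}| and a₁+⋯+a_{2n} even (these are the dominant weights of SO(4n)/ℤ₂). Then: (i) C_N(a) < 16(n−1) if and only if a is the zero tuple, or a = ε₁+ε₂, or (n ≥ 3 and a = 2ε₁); (ii) C_N(a) = 16(n−1) if and only if a = ε₁+ε₂+ε₃+ε₄, or n = 2 and a ∈ {2ε₁, ε₁+ε₂+ε₃−ε₄}. (Here 16(n−1) = C_N(ε₁+ε₂+ε₃+ε₄).) -/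

import Mathlib

open Finset

/-- The Casimir number `C_N(a) = Σ_{i=1}^{m} aᵢ(aᵢ + N − 2i)` (integer entries). -/
def casimirSOZ (N : ℕ) {m : ℕ} (a : Fin m → ℤ) : ℤ :=
  ∑ i : Fin m, a i * (a i + (N : ℤ) - 2 * ((i.1 : ℤ) + 1))

/-- The tuple `ε₁ + ⋯ + ε_k` (integer entries). -/
def epsSumZ (m k : ℕ) : Fin m → ℤ := fun j => if (j.1 : ℕ) < k then 1 else 0

/-- The tuple `2ε₁`. -/
def twoEps1Z (m : ℕ) : Fin m → ℤ := fun j => if j.1 = 0 then 2 else 0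

/-- The tuple `ε₁ + ε₂ + ε₃ − ε₄`. -/
def eps123Minus4Z (m : ℕ) : Fin m → ℤ :=
  fun j => if j.1 < 3 then 1 else if j.1 = 3 then -1 else 0

/-!
Put `bᵢ = |aᵢ|` (indices from `0`, extended by zero). Dominance makes `b` nonincreasing, and since
the coefficient `2m − 2(i+1)` vanishes at the last index, `C_{2m}(a) = Σ bᵢ (bᵢ + 2m − 2(i+1))`, a sum
of nonnegative terms, the `i`-th of which is at least `2m − 2i − 1` as soon as `bᵢ ≥ 1`. Five nonzero
entries would thus cost `10m − 25 > 8m − 16`, so only `b₀, …, b₃` can be nonzero, and a finite search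
over them under the parity condition leaves `0`, `ε₁+ε₂`, `2ε₁` and `ε₁+ε₂+ε₃+ε₄`; the sign of the
last entry is free only when `m = 4`. The theorem is the case `m = 2n`, read off from the values of
`C` on these tuples.
-/

def casimirTerm (N : ℕ) (x : ℤ) (i : ℕ) : ℤ := x * (x + N - 2 * (i + 1))

def zeroExtend {m : ℕ} (a : Fin m → ℤ) (i : ℕ) : ℤ := if h : i < m then a ⟨i, h⟩ else 0

section

variable {N m : ℕ}

lemma casimirSOZ_eq_sum_range (g : ℕ → ℤ) :
    casimirSOZ N (fun j : Fin m => g j) = ∑ i ∈ range m, casimirTerm N (g i) i :=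
  Fin.sum_univ_eq_sum_range (fun i => casimirTerm N (g i) i) m

@[simp]
lemma zeroExtend_val (a : Fin m → ℤ) (j : Fin m) : zeroExtend a j = a j := by
  simp [zeroExtend]

lemma zeroExtend_of_le (a : Fin m → ℤ) {i : ℕ} (hi : m ≤ i) : zeroExtend a i = 0 := by
  simp [zeroExtend, hi.not_gt]

lemma casimirSOZ_eq_sum_range_zeroExtend (a : Fin m → ℤ) :
    casimirSOZ N a = ∑ i ∈ range m, casimirTerm N (zeroExtend a i) i := by
  simpa using casimirSOZ_eq_sum_range (N := N) (m := m) (zeroExtend a)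

lemma sum_range_casimirTerm_one (k : ℕ) :
    ∑ i ∈ range k, casimirTerm N 1 i = k * ((N : ℤ) - k) := by
  induction k with
  | zero => simp
  | succ k ih => rw [sum_range_succ, ih, casimirTerm]; push_cast; ring

lemma casimirSOZ_epsSumZ {k : ℕ} (hk : k ≤ m) :
    casimirSOZ N (epsSumZ m k) = k * ((N : ℤ) - k) := by
  refine (casimirSOZ_eq_sum_range (fun i => if i < k then 1 else 0)).trans ?_
  rw [eventually_constant_sum (fun i hi => by simp [casimirTerm, not_lt.2 hi]) hk,
    ← sum_range_casimirTerm_one]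
  exact sum_congr rfl fun i hi => by rw [if_pos (mem_range.1 hi)]

lemma casimirSOZ_twoEps1Z (hm : 1 ≤ m) : casimirSOZ N (twoEps1Z m) = 2 * N := by
  refine (casimirSOZ_eq_sum_range (fun i => if i = 0 then 2 else 0)).trans ?_
  rw [eventually_constant_sum (fun i hi => by simp [casimirTerm, Nat.one_le_iff_ne_zero.1 hi]) hm]
  simp [casimirTerm]

lemma casimirSOZ_eps123Minus4Z (hm : 4 ≤ m) : casimirSOZ N (eps123Minus4Z m) = 2 * N := by
  refine (casimirSOZ_eq_sum_range
    (fun i => if i < 3 then 1 else if i = 3 then -1 else 0)).trans ?_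
  rw [eventually_constant_sum
    (fun i hi => by simp [casimirTerm, show ¬ i < 3 by omega, show i ≠ 3 by omega]) hm]
  simp [sum_range_succ, casimirTerm]
  ring

lemma casimirTerm_nonneg {x : ℤ} {i : ℕ} (hx : 0 ≤ x) (hi : 2 * (i + 1) ≤ N) :
    0 ≤ casimirTerm N x i := by
  unfold casimirTerm
  have : (2 * (i + 1) : ℤ) ≤ N := by exact_mod_cast hi
  nlinarith

lemma le_casimirTerm {x : ℤ} {i : ℕ} (hx : 1 ≤ x) (hi : 2 * (i + 1) ≤ N) :
    (N : ℤ) - 2 * i - 1 ≤ casimirTerm N x i := by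
  unfold casimirTerm
  have : (2 * (i + 1) : ℤ) ≤ N := by exact_mod_cast hi
  nlinarith

lemma casimirTerm_abs_of_eq {x : ℤ} {i : ℕ} (hi : 2 * (i + 1) = N) :
    casimirTerm N |x| i = casimirTerm N x i := by
  have : (N : ℤ) = 2 * (i + 1) := by exact_mod_cast hi.symm
  simp [casimirTerm, this]

lemma even_sum_range_abs_zeroExtend {a : Fin m → ℤ} (heven : Even (∑ i, a i)) :
    Even (∑ i ∈ range m, |zeroExtend a i|) := by
  have habs : ∀ x : ℤ, Even (|x| - x) := fun x => by
    rcases abs_choice x with h | h <;> rw [h]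
    · simp
    · exact ⟨-x, by ring⟩
  have hsplit : ∑ i ∈ range m, |zeroExtend a i|
      = ∑ i ∈ range m, zeroExtend a i + ∑ i ∈ range m, (|zeroExtend a i| - zeroExtend a i) := by
    rw [← sum_add_distrib]; simp
  rw [hsplit]
  exact (Finset.sum_fin_eq_sum_range a ▸ heven).add (even_sum _ fun i _ => habs _)

lemma zeroExtend_nonneg {a : Fin m → ℤ} (hm : 2 ≤ m)
    (hmono : ∀ i j : Fin m, i ≤ j → (j.1 : ℕ) + 1 < m → a j ≤ a i)
    (hlast : |a ⟨m - 1, by omega⟩| ≤ a ⟨m - 2, by omega⟩) {i : ℕ} (hi : i + 1 < m) :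
    0 ≤ zeroExtend a i := by
  rw [zeroExtend, dif_pos (by omega)]
  exact (abs_nonneg _).trans
    (hlast.trans (hmono _ _ (Fin.mk_le_mk.2 (by omega)) (show m - 2 + 1 < m by omega)))

lemma antitone_abs_zeroExtend {a : Fin m → ℤ} (hm : 2 ≤ m)
    (hmono : ∀ i j : Fin m, i ≤ j → (j.1 : ℕ) + 1 < m → a j ≤ a i)
    (hlast : |a ⟨m - 1, by omega⟩| ≤ a ⟨m - 2, by omega⟩) :
    Antitone fun i => |zeroExtend a i| := by
  intro i j hle
  show |zeroExtend a j| ≤ |zeroExtend a i|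
  rcases le_or_gt m j with hj | hj
  · simp [zeroExtend_of_le a hj]
  rcases eq_or_lt_of_le hle with rfl | hij
  · rfl
  have hi : i + 1 < m := by omega
  rw [abs_of_nonneg (zeroExtend_nonneg hm hmono hlast hi)]
  simp only [zeroExtend, dif_pos hj, dif_pos (hi.trans' (Nat.lt_succ_self i))]
  rcases lt_or_ge (j + 1) m with hj' | hj'
  · rw [abs_of_nonneg ((zeroExtend_nonneg hm hmono hlast hj').trans_eq (dif_pos hj))]
    exact hmono _ _ (Fin.mk_le_mk.2 hij.le) hj'
  · obtain rfl : j = m - 1 := by omega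
    exact hlast.trans (hmono _ _ (Fin.mk_le_mk.2 (by omega)) (show m - 2 + 1 < m by omega))

lemma casimirSOZ_eq_sum_abs {a : Fin m → ℤ}
    (hnonneg : ∀ i, i + 1 < m → 0 ≤ zeroExtend a i) :
    casimirSOZ (2 * m) a = ∑ i ∈ range m, casimirTerm (2 * m) |zeroExtend a i| i := by
  rw [casimirSOZ_eq_sum_range_zeroExtend]
  refine sum_congr rfl fun i hi => ?_
  rcases lt_or_ge (i + 1) m with h | h
  · rw [abs_of_nonneg (hnonneg i h)]
  · rw [casimirTerm_abs_of_eq (by simp at hi; omega)]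

lemma eq_of_casimirTerm_four_le {x₀ x₁ x₂ x₃ : ℤ} (hm : 4 ≤ m) (h₁ : x₁ ≤ x₀)
    (h₂ : x₂ ≤ x₁) (h₃ : x₃ ≤ x₂) (h₃' : 0 ≤ x₃) (heven : Even (x₀ + x₁ + x₂ + x₃))
    (hC : casimirTerm (2 * m) x₀ 0 + casimirTerm (2 * m) x₁ 1 + casimirTerm (2 * m) x₂ 2
      + casimirTerm (2 * m) x₃ 3 ≤ 8 * m - 16) :
    (x₀ = 0 ∧ x₁ = 0 ∧ x₂ = 0 ∧ x₃ = 0) ∨ (x₀ = 1 ∧ x₁ = 1 ∧ x₂ = 0 ∧ x₃ = 0) ∨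
      (x₀ = 2 ∧ x₁ = 0 ∧ x₂ = 0 ∧ x₃ = 0) ∨ (x₀ = 1 ∧ x₁ = 1 ∧ x₂ = 1 ∧ x₃ = 1) := by
  simp only [casimirTerm] at hC
  push_cast at hC
  have hm' : (4 : ℤ) ≤ m := by exact_mod_cast hm
  have h₀ : x₀ ≤ 3 := by nlinarith
  obtain ⟨k, hk⟩ := heven
  have : 0 ≤ x₂ := h₃'.trans h₃
  have : 0 ≤ x₁ := this.trans h₂
  have : 0 ≤ x₀ := this.trans h₁
  interval_cases x₀ <;> interval_cases x₁ <;> interval_cases x₂ <;> interval_cases x₃ <;> omega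

lemma eq_of_sum_casimirTerm_le {b : ℕ → ℤ} (hm : 4 ≤ m) (hb : Antitone b)
    (hb0 : ∀ i, 0 ≤ b i) (hsupp : ∀ i, m ≤ i → b i = 0) (heven : Even (∑ i ∈ range m, b i))
    (hC : ∑ i ∈ range m, casimirTerm (2 * m) (b i) i ≤ 8 * m - 16) :
    b = 0 ∨ b = (fun i => if i < 2 then 1 else 0) ∨ b = (fun i => if i = 0 then 2 else 0) ∨
      b = (fun i => if i < 4 then 1 else 0) := by
  have hprefix : ∀ k ≤ m, ∑ i ∈ range k, casimirTerm (2 * m) (b i) i ≤ 8 * m - 16 :=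
    fun k hk => (sum_le_sum_of_subset_of_nonneg (range_subset_range.2 hk) fun i hi _ =>
      casimirTerm_nonneg (hb0 i) (by simp at hi; omega)).trans hC
  have hb4 : b 4 = 0 := by
    by_contra h
    have hm5 : 5 ≤ m := by by_contra; exact h (hsupp 4 (by omega))
    have hpos : ∀ i ≤ 4, 1 ≤ b i := fun i hi =>
      (lt_of_le_of_ne (hb0 4) (Ne.symm h)).trans_le (hb hi)
    have h5 : ∑ i ∈ range 5, (((2 * m : ℕ) : ℤ) - 2 * i - 1) ≤ 8 * m - 16 :=
      (sum_le_sum fun i hi => le_casimirTerm (hpos i (by simp at hi; omega))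
        (by simp at hi; omega)).trans (hprefix 5 hm5)
    simp only [sum_range_succ, sum_range_zero] at h5
    push_cast at h5
    have hm' : (5 : ℤ) ≤ m := by exact_mod_cast hm5
    linarith
  have htail : ∀ i, 4 ≤ i → b i = 0 := fun i hi => le_antisymm (hb4 ▸ hb hi) (hb0 i)
  rw [eventually_constant_sum htail hm] at heven
  rw [eventually_constant_sum (fun i hi => by simp [casimirTerm, htail i hi]) hm] at hC
  simp only [sum_range_succ, sum_range_zero, zero_add] at heven hC
  have hb_eq : b = fun i => if i = 0 then b 0 else if i = 1 then b 1 else if i = 2 then b 2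
      else if i = 3 then b 3 else 0 := by
    funext i
    rcases i with _ | _ | _ | _ | i <;> simp [htail]
  rcases eq_of_casimirTerm_four_le hm (hb (by omega)) (hb (by omega)) (hb (by omega)) (hb0 3)
    heven hC with ⟨h₀, h₁, h₂, h₃⟩ | ⟨h₀, h₁, h₂, h₃⟩ | ⟨h₀, h₁, h₂, h₃⟩ | ⟨h₀, h₁, h₂, h₃⟩
  · left; rw [hb_eq, h₀, h₁, h₂, h₃]; funext i; simp
  · right; left; rw [hb_eq, h₀, h₁, h₂, h₃]; funext i; split_ifs <;> omega
  · right; right; left; rw [hb_eq, h₀, h₁, h₂, h₃]; funext i; split_ifs <;> omega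
  · right; right; right; rw [hb_eq, h₀, h₁, h₂, h₃]; funext i; split_ifs <;> omega

lemma eq_of_abs_zeroExtend {a : Fin m → ℤ} {g : ℕ → ℤ}
    (hnonneg : ∀ i, i + 1 < m → 0 ≤ zeroExtend a i)
    (habs : ∀ i, i + 1 < m → |zeroExtend a i| = g i)
    (hlast : ∀ i, i + 1 = m → zeroExtend a i = g i) :
    a = fun j : Fin m => g j := by
  funext j
  rw [← zeroExtend_val a j]
  rcases lt_or_ge (j.1 + 1) m with hj | hj
  · rw [← habs j hj, abs_of_nonneg (hnonneg j hj)]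
  · exact hlast j (by omega)

theorem eq_of_casimirSOZ_le {a : Fin m → ℤ} (hm : 4 ≤ m)
    (hmono : ∀ i j : Fin m, i ≤ j → (j.1 : ℕ) + 1 < m → a j ≤ a i)
    (hlast : |a ⟨m - 1, by omega⟩| ≤ a ⟨m - 2, by omega⟩)
    (heven : Even (∑ i, a i)) (hC : casimirSOZ (2 * m) a ≤ 8 * m - 16) :
    a = 0 ∨ a = epsSumZ m 2 ∨ a = twoEps1Z m ∨ a = epsSumZ m 4 ∨
      (m = 4 ∧ a = eps123Minus4Z m) := by
  have hnonneg : ∀ i, i + 1 < m → 0 ≤ zeroExtend a i :=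
    fun i => zeroExtend_nonneg (by omega) hmono hlast
  have hzero : ∀ g : ℕ → ℤ, (fun i => |zeroExtend a i|) = g → g (m - 1) = 0 →
      a = fun j : Fin m => g j := fun g h hg =>
    eq_of_abs_zeroExtend hnonneg (fun i _ => congrFun h i) fun i hi => by
      obtain rfl : i = m - 1 := by omega
      exact (abs_eq_zero.1 ((congrFun h _).trans hg)).trans hg.symm
  rcases eq_of_sum_casimirTerm_le hm (antitone_abs_zeroExtend (by omega) hmono hlast)
      (fun i => abs_nonneg _) (fun i hi => by simp [zeroExtend_of_le a hi])
      (even_sum_range_abs_zeroExtend heven) ((casimirSOZ_eq_sum_abs hnonneg).symm.trans_le hC)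
    with h | h | h | h
  · exact Or.inl (hzero 0 h rfl)
  · exact Or.inr (Or.inl (hzero _ h (if_neg (by omega))))
  · exact Or.inr (Or.inr (Or.inl (hzero _ h (if_neg (by omega)))))
  rcases eq_or_lt_of_le hm with rfl | hm5
  swap
  · exact Or.inr (Or.inr (Or.inr (Or.inl (hzero _ h (if_neg (by omega))))))
  have h3 : |zeroExtend a 3| = 1 := by simpa using congrFun h 3
  rcases abs_eq zero_le_one |>.1 h3 with h3 | h3
  · refine Or.inr (Or.inr (Or.inr (Or.inl ?_)))
    exact eq_of_abs_zeroExtend hnonneg (fun i _ => congrFun h i) fun i hi => by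
      obtain rfl : i = 3 := by omega
      simpa using h3
  · refine Or.inr (Or.inr (Or.inr (Or.inr ⟨rfl, ?_⟩)))
    refine eq_of_abs_zeroExtend (g := fun i => if i < 3 then 1 else if i = 3 then -1 else 0)
      hnonneg (fun i hi => ?_) fun i hi => ?_
    · simp [congrFun h i, show i < 3 by omega, show i < 4 by omega]
    · obtain rfl : i = 3 := by omega
      simpa using h3

end

/-- let `n ≥ 2`, `N = 4n`, and let `a = (a₁,…,a_{2n})` be integers
with `a₁ ≥ ⋯ ≥ a_{2n−1} ≥ |a_{2n}|` and `a₁+⋯+a_{2n}` even. Then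
(i) `C_N(a) < 16(n−1)` iff `a = 0`, `a = ε₁+ε₂`, or (`n ≥ 3` and `a = 2ε₁`);
(ii) `C_N(a) = 16(n−1)` iff `a = ε₁+ε₂+ε₃+ε₄`, or `n = 2` and
`a ∈ {2ε₁, ε₁+ε₂+ε₃−ε₄}`. -/
theorem stmt6 (n : ℕ) (hn : 2 ≤ n) (a : Fin (2 * n) → ℤ)
    (hmono : ∀ i j : Fin (2 * n), i ≤ j → (j.1 : ℕ) + 1 < 2 * n → a j ≤ a i)
    (hlast : |a ⟨2 * n - 1, by omega⟩| ≤ a ⟨2 * n - 2, by omega⟩)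
    (heven : Even (∑ i, a i)) :
    (casimirSOZ (4 * n) a < 16 * ((n : ℤ) - 1) ↔
      a = 0 ∨ a = epsSumZ (2 * n) 2 ∨ (3 ≤ n ∧ a = twoEps1Z (2 * n))) ∧
    (casimirSOZ (4 * n) a = 16 * ((n : ℤ) - 1) ↔
      a = epsSumZ (2 * n) 4 ∨
      (n = 2 ∧ (a = twoEps1Z (2 * n) ∨ a = eps123Minus4Z (2 * n)))) := by
  rw [show 4 * n = 2 * (2 * n) by ring]
  have hclass := fun hC => eq_of_casimirSOZ_le (by omega) hmono hlast heven hC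
  have hC₀ : a = 0 → casimirSOZ (2 * (2 * n)) a = 0 := by
    rintro rfl; simp [casimirSOZ]
  have hCε₂ : a = epsSumZ (2 * n) 2 → casimirSOZ (2 * (2 * n)) a = 8 * n - 4 := by
    rintro rfl; rw [casimirSOZ_epsSumZ (by omega)]; push_cast; ring
  have hCε₄ : a = epsSumZ (2 * n) 4 → casimirSOZ (2 * (2 * n)) a = 16 * n - 16 := by
    rintro rfl; rw [casimirSOZ_epsSumZ (by omega)]; push_cast; ring
  have hCtwoε₁ : a = twoEps1Z (2 * n) → casimirSOZ (2 * (2 * n)) a = 8 * n := by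
    rintro rfl; rw [casimirSOZ_twoEps1Z (by omega)]; push_cast; ring
  have hCε₁₂₃ε₄ : a = eps123Minus4Z (2 * n) → casimirSOZ (2 * (2 * n)) a = 8 * n := by
    rintro rfl; rw [casimirSOZ_eps123Minus4Z (by omega)]; push_cast; ring
  push_cast at hclass
  -- the five candidate tuples are told apart by their Casimir values
  grind
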